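/- arXiv:1905.03481 — 6 statements merged into one kernel-verified Lean document; each statement's English description precedes it below -/
import Mathlib

section
/- Every fusion law (X,*) admits a unique finest grading, given by the group Γ_X with presentation ⟨γ_x (x ∈ X) | γ_x γ_y = γ_z whenever z ∈ x * y⟩ and grading map x ↦ γ_x; that is, every grading ζ : (X,*) → (Λ,*) factors as ζ = ρ ∘ ξ for a unique group homomorphism ρ : Γ_X → Λ. -/
/-- The relators of the finest grading group of a fusion law:
`γ_x γ_y γ_z⁻¹` whenever `z ∈ x * y`. -/
def fusionRels {X : Type*} (law : X → X → Set X) : Set (FreeGroup X) :=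
  {r | ∃ x y z, z ∈ law x y ∧ r = FreeGroup.of x * FreeGroup.of y * (FreeGroup.of z)⁻¹}

namespace fusionRels

variable {X : Type*} {law : X → X → Set X}

theorem of_eq_of_mul_of {x y z : X} (hz : z ∈ law x y) :
    (PresentedGroup.of z : PresentedGroup (fusionRels law)) =
      PresentedGroup.of x * PresentedGroup.of y := by
  have h := PresentedGroup.mk_eq_mk_of_mul_inv_mem (rels := fusionRels law) ⟨x, y, z, hz, rfl⟩
  rw [map_mul] at h
  exact h.symm

theorem lift_eq_one {Λ : Type*} [Group Λ] {ζ : X → Λ}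
    (hζ : ∀ x y z, z ∈ law x y → ζ z = ζ x * ζ y) :
    ∀ r ∈ fusionRels law, FreeGroup.lift ζ r = 1 := by
  rintro r ⟨x, y, z, hz, rfl⟩
  simp [hζ x y z hz, mul_assoc]

end fusionRels

/-- Every fusion law admits a unique finest grading, given by the presented group
`Γ_X = ⟨γ_x (x ∈ X) ∣ γ_x γ_y = γ_z whenever z ∈ x * y⟩` with grading map `x ↦ γ_x`:
the map is a grading, and every grading into a group `Λ` factors through it via a
unique group homomorphism. -/
theorem finest_grading {X : Type*} (law : X → X → Set X) :
    (∀ x y z, z ∈ law x y →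
      (PresentedGroup.of z : PresentedGroup (fusionRels law)) =
        PresentedGroup.of x * PresentedGroup.of y) ∧
    ∀ (Λ : Type*) [Group Λ] (ζ : X → Λ),
      (∀ x y z, z ∈ law x y → ζ z = ζ x * ζ y) →
      ∃! ρ : PresentedGroup (fusionRels law) →* Λ,
        ∀ x, ρ (PresentedGroup.of x) = ζ x := by
  refine ⟨fun _ _ _ => fusionRels.of_eq_of_mul_of, fun Λ _ ζ hζ => ?_⟩
  have h := fusionRels.lift_eq_one hζ
  refine ⟨PresentedGroup.toGroup h, fun _ => PresentedGroup.toGroup.of h, fun ρ hρ => ?_⟩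
  exact PresentedGroup.ext fun x => by rw [hρ x, PresentedGroup.toGroup.of h]
end

section
/- Let G be a group with finitely many conjugacy classes and let (X,*) be its class fusion law. Then the finest grading of (X,*) is given by the abelianization Γ = G/[G,G] with grading map sending the conjugacy class of g to its image ḡ in G/[G,G]. -/
/-- The class fusion law of a group `G`, on the set of conjugacy classes:
`E ∈ C * D` iff `E` meets the setwise product `CD`. -/
def classLaw (G : Type*) [Group G] :
    ConjClasses G → ConjClasses G → Set (ConjClasses G) :=
  fun C D => {E | ∃ c d : G, ConjClasses.mk c = C ∧ ConjClasses.mk d = D ∧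
    ConjClasses.mk (c * d) = E}

private theorem of_conj_eq {G : Type*} [Group G] {a b : G} (h : IsConj a b) :
    Abelianization.of a = Abelianization.of b := by
  obtain ⟨c, hc⟩ := isConj_iff.mp h
  subst hc
  simp [map_mul, mul_comm, mul_assoc]

/-- For a group `G` with finitely many conjugacy classes, the finest grading of its
class fusion law is given by the abelianization `G/[G,G]`, with grading map sending
the class of `g` to its image in `G/[G,G]`. -/
theorem class_fusion_finest_grading (G : Type*) [Group G] [Finite (ConjClasses G)] :
    ∃ ξ : ConjClasses G → Abelianization G,
      (∀ g : G, ξ (ConjClasses.mk g) = Abelianization.of g) ∧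
      (∀ C D E, E ∈ classLaw G C D → ξ E = ξ C * ξ D) ∧
      ∀ (Λ : Type*) [Group Λ] (ζ : ConjClasses G → Λ),
        (∀ C D E, E ∈ classLaw G C D → ζ E = ζ C * ζ D) →
        ∃! ρ : Abelianization G →* Λ, ∀ C, ρ (ξ C) = ζ C := by
  refine ⟨Quotient.lift (fun g => Abelianization.of g) (fun a b h => of_conj_eq h), ?_, ?_, ?_⟩
  · intro g; rfl
  · rintro C D E ⟨c, d, rfl, rfl, rfl⟩
    exact map_mul _ c d
  · intro Λ _ ζ hζ
    have hmul : ∀ a b : G, ζ (ConjClasses.mk (a * b)) =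
        ζ (ConjClasses.mk a) * ζ (ConjClasses.mk b) := by
      intro a b
      exact hζ _ _ _ ⟨a, b, rfl, rfl, rfl⟩
    set φ : G →* Λ := MonoidHom.mk' (fun g => ζ (ConjClasses.mk g)) hmul with hφ
    have hconj : ∀ a b : G, φ (a * b * a⁻¹) = φ b := by
      intro a b
      have : ConjClasses.mk (a * b * a⁻¹) = ConjClasses.mk b := by
        apply ConjClasses.mk_eq_mk_iff_isConj.mpr
        exact (isConj_iff.mpr ⟨a, rfl⟩).symm
      simp only [hφ, MonoidHom.mk'_apply, this]
    have hcomm : ∀ a b : G, φ a * φ b = φ b * φ a := by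
      intro a b
      have h1 := hconj a b
      rw [map_mul, map_mul, map_inv] at h1
      have := congrArg (· * φ a) h1
      simpa [mul_assoc] using this
    have hker : commutator G ≤ φ.ker := by
      rw [commutator, Subgroup.commutator_le]
      intro a _ b _
      simp only [MonoidHom.mem_ker, commutatorElement_def, map_mul, map_inv]
      rw [hcomm a b]
      group
    refine ⟨QuotientGroup.lift (commutator G) φ hker, ?_, ?_⟩
    · intro C
      induction C using Quotient.inductionOn with
      | h g => rfl
    · intro ρ hρ
      ext g
      exact hρ (ConjClasses.mk g)
end

section
/- Let (φ, ψ) : (A, I, Ω_A) → (B, J, Ω_B) be a morphism of Γ-decomposition algebras with φ surjective, and let Y be a subgroup of the character group X_R(Γ). Then the assignment τ_{i,χ} ↦ τ_{ψ(i),χ} extends to a well-defined group homomorphism from the Miyamoto group Miy_Y(A, I, Ω_A) to Miy_Y(B, J, Ω_B); i.e., every relation among the generators τ_{i,χ} in Aut(A) is preserved among the τ_{ψ(i),χ} in Aut(B). -/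
/-- For a surjective morphism `(φ, ψ)` of `Γ`-decomposition algebras and a subgroup `Y`
of the character group, every relation among the Miyamoto generators `τ_{i,χ}` in `Aut A`
is preserved among the `τ_{ψ(i),χ}` in `Aut B`; hence `τ_{i,χ} ↦ τ_{ψ(i),χ}` extends to a
group homomorphism `Miy_Y(A) → Miy_Y(B)`. -/
theorem miyamoto_functorial_surjective {R : Type*} [CommRing R]
    {A : Type*} [NonUnitalNonAssocRing A] [Module R A]
    {B : Type*} [NonUnitalNonAssocRing B] [Module R B]
    {Γ : Type*} [Group Γ] {I J : Type*}
    (DA : I → Γ → Submodule R A) (DB : J → Γ → Submodule R B)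
    (hindepA : ∀ i, iSupIndep (DA i)) (hsupA : ∀ i, ⨆ g, DA i g = ⊤)
    (hmulA : ∀ i g h, ∀ a ∈ DA i g, ∀ b ∈ DA i h, a * b ∈ DA i (g * h))
    (hindepB : ∀ j, iSupIndep (DB j)) (hsupB : ∀ j, ⨆ g, DB j g = ⊤)
    (hmulB : ∀ j g h, ∀ a ∈ DB j g, ∀ b ∈ DB j h, a * b ∈ DB j (g * h))
    (φ : A →ₗ[R] B) (hφmul : ∀ a b : A, φ (a * b) = φ a * φ b)
    (hφsurj : Function.Surjective φ)
    (ψ : I → J) (hφψ : ∀ i g, (DA i g).map φ ≤ DB (ψ i) g)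
    (Y : Subgroup (Γ →* Rˣ))
    (τA : I → (Γ →* Rˣ) → (A ≃ₗ[R] A))
    (hτA : ∀ i χ g, ∀ a ∈ DA i g, τA i χ a = (χ g : R) • a)
    (τB : J → (Γ →* Rˣ) → (B ≃ₗ[R] B))
    (hτB : ∀ j χ g, ∀ b ∈ DB j g, τB j χ b = (χ g : R) • b) :
    ∀ l : List (I × (Γ →* Rˣ)), (∀ p ∈ l, p.2 ∈ Y) →
      (l.map fun p => τA p.1 p.2).prod = 1 →
      (l.map fun p => τB (ψ p.1) p.2).prod = 1 := by
  -- key commuting lemma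
  have comm : ∀ i χ (a : A), φ (τA i χ a) = τB (ψ i) χ (φ a) := by
    intro i χ a
    have ha : a ∈ (⊤ : Submodule R A) := trivial
    rw [← hsupA i] at ha
    induction ha using Submodule.iSup_induction' with
    | mem g x hx =>
      have hφx : φ x ∈ DB (ψ i) g := hφψ i g ⟨x, hx, rfl⟩
      rw [hτA i χ g x hx, hτB (ψ i) χ g (φ x) hφx, map_smul]
    | zero => simp
    | add x y _ _ hx hy => simp [map_add, hx, hy]
  have commL : ∀ (l : List (I × (Γ →* Rˣ))) (a : A),
      φ ((l.map fun p => τA p.1 p.2).prod a) = (l.map fun p => τB (ψ p.1) p.2).prod (φ a) := by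
    intro l
    induction l with
    | nil => intro a; simp
    | cons p t ih =>
      intro a
      simp only [List.map_cons, List.prod_cons]
      have hm : ∀ (f g : A ≃ₗ[R] A) (x : A), (f * g) x = f (g x) := fun _ _ _ => rfl
      have hm' : ∀ (f g : B ≃ₗ[R] B) (x : B), (f * g) x = f (g x) := fun _ _ _ => rfl
      rw [hm, hm', comm, ih]
  intro l _ h1
  ext b
  obtain ⟨a, rfl⟩ := hφsurj b
  have := commL l a
  rw [h1] at this
  simpa using this.symm
end

section
/- Let (A, I, Ω) be a Γ-decomposition algebra over R that is Miyamoto-closed with respect to a subgroup Y of the character group. Then the universal Miyamoto group ŴMiy_Y(A, I, Ω) is a central extension of the Miyamoto group Miy_Y(A, I, Ω); i.e., the canonical epimorphism Φ : ŴMiy_Y(A, I, Ω) → Miy_Y(A, I, Ω) sending t_{i,χ} ↦ τ_{i,χ} has central kernel. -/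
/-- The relators of the universal Miyamoto group: for generators `t_{i,χ}` (with
`χ` ranging over a subgroup `Y` of the character group, and one copy of `Y` for each
index `i`), we impose `t_{i,χ} t_{j,χ'} t_{i,χ}⁻¹ = t_{k,χ'}` whenever the conjugation
relation `τ_{i,χ} τ_{j,χ''} τ_{i,χ}⁻¹ = τ_{k,χ''}` holds for *all* `χ'' ∈ Y`. -/
def umiyRels {R : Type*} [CommRing R] {A : Type*} [NonUnitalNonAssocRing A] [Module R A]
    {Γ : Type*} [Group Γ] {I : Type*} (Y : Subgroup (Γ →* Rˣ))
    (τ : I → (Γ →* Rˣ) → (A ≃ₗ[R] A)) :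
    Set (Monoid.CoprodI (fun _ : I => Y)) :=
  {w | ∃ (i j k : I) (χ χ' : Y),
    (∀ χ'' : Y, τ i (χ : Γ →* Rˣ) * τ j (χ'' : Γ →* Rˣ) * (τ i (χ : Γ →* Rˣ))⁻¹ =
      τ k (χ'' : Γ →* Rˣ)) ∧
    w = Monoid.CoprodI.of (i := i) χ * Monoid.CoprodI.of (i := j) χ' *
      (Monoid.CoprodI.of (i := i) χ)⁻¹ * (Monoid.CoprodI.of (i := k) χ')⁻¹}

/-- The universal Miyamoto group of a Miyamoto-closed `Γ`-decomposition algebra: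
the quotient of the free product of the copies `Y_i` of `Y` by the global conjugation
relators. -/
def UMiy {R : Type*} [CommRing R] {A : Type*} [NonUnitalNonAssocRing A] [Module R A]
    {Γ : Type*} [Group Γ] {I : Type*} (Y : Subgroup (Γ →* Rˣ))
    (τ : I → (Γ →* Rˣ) → (A ≃ₗ[R] A)) : Type _ :=
  Monoid.CoprodI (fun _ : I => Y) ⧸ Subgroup.normalClosure (umiyRels Y τ)

noncomputable instance {R : Type*} [CommRing R] {A : Type*} [NonUnitalNonAssocRing A]
    [Module R A] {Γ : Type*} [Group Γ] {I : Type*} (Y : Subgroup (Γ →* Rˣ))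
    (τ : I → (Γ →* Rˣ) → (A ≃ₗ[R] A)) : Group (UMiy Y τ) :=
  QuotientGroup.Quotient.group _

/-! The Miyamoto maps of one decomposition form a representation of the character group, and an
automorphism carrying decomposition `j` into decomposition `k` conjugates `τ_j` to `τ_k`.
Inducting on words, conjugating a generator `t_{j,χ}` by any word `v` gives a generator `t_{k,χ}`
of the universal group, where `k` is such that the image of `v` conjugates `τ_j` to `τ_k`. If `v`
lies in the kernel then `τ_j = τ_k`, so the relator with trivial conjugating character identifies
`t_{j,χ}` with `t_{k,χ}`: the class of `v` commutes with every generator. -/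

theorem linearEquiv_ext_of_iSup_eq_top {R A ι : Type*} [Semiring R] [AddCommMonoid A]
    [Module R A] {D : ι → Submodule R A} (hD : ⨆ i, D i = ⊤) {f f' : A ≃ₗ[R] A}
    (h : ∀ i, ∀ a ∈ D i, f a = f' a) : f = f' := by
  refine LinearEquiv.toLinearMap_injective (LinearMap.eqLocus_eq_top.mp (eq_top_iff.mpr ?_))
  exact hD ▸ iSup_le fun i a ha => h i a ha

section Decomposition

variable {R A Γ : Type*} [CommSemiring R] [AddCommMonoid A] [Module R A] [Group Γ]
  {D : Γ → Submodule R A} {τ : (Γ →* Rˣ) → (A ≃ₗ[R] A)}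

def miyamotoHom (hD : ⨆ g, D g = ⊤) (hτ : ∀ χ g, ∀ a ∈ D g, τ χ a = (χ g : R) • a) :
    (Γ →* Rˣ) →* (A ≃ₗ[R] A) where
  toFun := τ
  map_one' := linearEquiv_ext_of_iSup_eq_top hD fun g a ha => by
    rw [hτ 1 g a ha, MonoidHom.one_apply, Units.val_one, one_smul]; rfl
  map_mul' χ χ' := linearEquiv_ext_of_iSup_eq_top hD fun g a ha => by
    rw [hτ _ g a ha, LinearEquiv.mul_apply, hτ χ' g a ha, map_smul, hτ χ g a ha, smul_smul,
      MonoidHom.mul_apply, Units.val_mul, mul_comm]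

theorem conj_miyamoto_eq_of_mapsTo (hD : ⨆ g, D g = ⊤)
    (hτ : ∀ χ g, ∀ a ∈ D g, τ χ a = (χ g : R) • a) {D' : Γ → Submodule R A}
    {τ' : (Γ →* Rˣ) → (A ≃ₗ[R] A)} (hτ' : ∀ χ g, ∀ a ∈ D' g, τ' χ a = (χ g : R) • a)
    {f : A ≃ₗ[R] A} (hf : ∀ g, ∀ a ∈ D g, f a ∈ D' g) (χ : Γ →* Rˣ) :
    f * τ χ * f⁻¹ = τ' χ := by
  rw [mul_inv_eq_iff_eq_mul]
  refine linearEquiv_ext_of_iSup_eq_top hD fun g a ha => ?_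
  rw [LinearEquiv.mul_apply, LinearEquiv.mul_apply, hτ χ g a ha, map_smul, hτ' χ g _ (hf g a ha)]

end Decomposition

section ConjugationClosed

open Monoid.CoprodI

variable {ι M H G : Type*} [Group M] [Group H] [Group G] {σ : ι → M →* H}
  {π : (Monoid.CoprodI fun _ : ι => M) →* G}

theorem exists_conj_lift_eq_and_conj_map_of_eq
    (hrel : ∀ i j k (χ χ' : M), (∀ χ'', σ i χ * σ j χ'' * (σ i χ)⁻¹ = σ k χ'') →
      π (of (i := i) χ) * π (of (i := j) χ') * (π (of (i := i) χ))⁻¹ = π (of (i := k) χ'))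
    (hclosed : ∀ i χ j, ∃ k, ∀ χ'', σ i χ * σ j χ'' * (σ i χ)⁻¹ = σ k χ'')
    (v : Monoid.CoprodI fun _ : ι => M) (j : ι) :
    ∃ k, (∀ χ, lift σ v * σ j χ * (lift σ v)⁻¹ = σ k χ) ∧
      ∀ χ, π v * π (of (i := j) χ) * (π v)⁻¹ = π (of (i := k) χ) := by
  induction v using Monoid.CoprodI.induction_on generalizing j with
  | one => exact ⟨j, fun χ => by simp, fun χ => by simp⟩
  | of i χ =>
    obtain ⟨k, hk⟩ := hclosed i χ j
    exact ⟨k, by simpa only [lift_of] using hk, fun χ' => hrel i j k χ χ' hk⟩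
  | mul x y hx hy =>
    obtain ⟨k₁, hσ₁, hπ₁⟩ := hy j
    obtain ⟨k₂, hσ₂, hπ₂⟩ := hx k₁
    refine ⟨k₂, fun χ => ?_, fun χ => ?_⟩
    · rw [← hσ₂, ← hσ₁, map_mul]; group
    · rw [← hπ₂, ← hπ₁, map_mul]; group

theorem commute_map_of_lift_eq_one
    (hrel : ∀ i j k (χ χ' : M), (∀ χ'', σ i χ * σ j χ'' * (σ i χ)⁻¹ = σ k χ'') →
      π (of (i := i) χ) * π (of (i := j) χ') * (π (of (i := i) χ))⁻¹ = π (of (i := k) χ'))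
    (hclosed : ∀ i χ j, ∃ k, ∀ χ'', σ i χ * σ j χ'' * (σ i χ)⁻¹ = σ k χ'')
    {v : Monoid.CoprodI fun _ : ι => M} (hv : lift σ v = 1) (u : Monoid.CoprodI fun _ : ι => M) :
    Commute (π u) (π v) := by
  induction u using Monoid.CoprodI.induction_on with
  | one => simp
  | of j χ =>
    obtain ⟨k, hσ, hπ⟩ := exists_conj_lift_eq_and_conj_map_of_eq hrel hclosed v j
    simp only [hv, one_mul, inv_one, mul_one] at hσ
    have hjk : π (of (i := j) χ) = π (of (i := k) χ) := by
      simpa using hrel j j k 1 χ (by simpa using hσ)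
    exact (mul_inv_eq_iff_eq_mul.mp ((hπ χ).trans hjk.symm)).symm
  | mul x y hx hy => rw [map_mul]; exact hx.mul_left hy

end ConjugationClosed

theorem universal_miyamoto_central_extension_general {R : Type*} [CommRing R]
    {A : Type*} [NonUnitalNonAssocRing A] [Module R A]
    {Γ : Type*} [Group Γ] {I : Type*}
    (D : I → Γ → Submodule R A)
    (hsup : ∀ i, ⨆ g, D i g = ⊤)
    (Y : Subgroup (Γ →* Rˣ))
    (τ : I → (Γ →* Rˣ) → (A ≃ₗ[R] A))
    (hτ : ∀ i χ g, ∀ a ∈ D i g, τ i χ a = (χ g : R) • a)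
    -- Miyamoto-closedness: each Miyamoto map permutes the decompositions
    (hclosed : ∀ i, ∀ χ ∈ Y, ∃ π : Equiv.Perm I, ∀ j g,
      (D j g).map (τ i χ : A →ₗ[R] A) = D (π j) g) :
    ∃ Φ : UMiy Y τ →* (A ≃ₗ[R] A),
      (∀ (i : I) (χ : Y),
        Φ (QuotientGroup.mk (Monoid.CoprodI.of (i := i) χ)) = τ i (χ : Γ →* Rˣ)) ∧
      Φ.ker ≤ Subgroup.center (UMiy Y τ) := by
  let σ : I → Y →* (A ≃ₗ[R] A) := fun i => (miyamotoHom (hsup i) (hτ i)).comp Y.subtype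
  let N := Subgroup.normalClosure (umiyRels Y τ)
  have hrel : ∀ i j k (χ χ' : Y), (∀ χ'', σ i χ * σ j χ'' * (σ i χ)⁻¹ = σ k χ'') →
      QuotientGroup.mk' N (.of (i := i) χ) * QuotientGroup.mk' N (.of (i := j) χ') *
        (QuotientGroup.mk' N (.of (i := i) χ))⁻¹ = QuotientGroup.mk' N (.of (i := k) χ') := by
    intro i j k χ χ' hconj
    have hmem : _ ∈ N := Subgroup.subset_normalClosure ⟨i, j, k, χ, χ', hconj, rfl⟩
    rwa [← QuotientGroup.eq_one_iff, ← QuotientGroup.mk'_apply, map_mul, map_inv,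
      mul_inv_eq_one, map_mul, map_mul, map_inv] at hmem
  have hσclosed : ∀ i χ j, ∃ k, ∀ χ'', σ i χ * σ j χ'' * (σ i χ)⁻¹ = σ k χ'' := by
    intro i χ j
    obtain ⟨π, hπ⟩ := hclosed i χ χ.2
    exact ⟨π j, fun χ'' => conj_miyamoto_eq_of_mapsTo (hsup j) (hτ j) (hτ (π j))
      (fun g a ha => hπ j g ▸ Submodule.mem_map_of_mem ha) χ''⟩
  have hN : N ≤ (Monoid.CoprodI.lift σ).ker := by
    refine Subgroup.normalClosure_le_normal ?_
    rintro _ ⟨i, j, k, χ, χ', hconj, rfl⟩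
    simp only [SetLike.mem_coe, MonoidHom.mem_ker, map_mul, map_inv, Monoid.CoprodI.lift_of]
    exact mul_inv_eq_one.mpr (hconj χ')
  refine ⟨QuotientGroup.lift N (Monoid.CoprodI.lift σ) hN, fun i χ => Monoid.CoprodI.lift_of σ χ,
    ?_⟩
  intro w hw
  refine Subgroup.mem_center_iff.mpr fun z => ?_
  obtain ⟨v, rfl⟩ := QuotientGroup.mk'_surjective N w
  obtain ⟨u, rfl⟩ := QuotientGroup.mk'_surjective N z
  exact commute_map_of_lift_eq_one hrel hσclosed hw u

/-- If `(A, I, Ω)` is a `Γ`-decomposition algebra that is Miyamoto-closed with respect to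
a subgroup `Y` of the character group, then the universal Miyamoto group is a central
extension of the Miyamoto group: the canonical epimorphism `t_{i,χ} ↦ τ_{i,χ}` onto the
subgroup of `Aut A` generated by the Miyamoto maps has central kernel. -/
theorem universal_miyamoto_central_extension {R : Type*} [CommRing R]
    {A : Type*} [NonUnitalNonAssocRing A] [Module R A]
    {Γ : Type*} [Group Γ] {I : Type*}
    (D : I → Γ → Submodule R A)
    (hindep : ∀ i, iSupIndep (D i)) (hsup : ∀ i, ⨆ g, D i g = ⊤)
    (hmul : ∀ i g h, ∀ a ∈ D i g, ∀ b ∈ D i h, a * b ∈ D i (g * h))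
    (Y : Subgroup (Γ →* Rˣ))
    (τ : I → (Γ →* Rˣ) → (A ≃ₗ[R] A))
    (hτ : ∀ i χ g, ∀ a ∈ D i g, τ i χ a = (χ g : R) • a)
    -- Miyamoto-closedness: each Miyamoto map permutes the decompositions
    (hclosed : ∀ i, ∀ χ ∈ Y, ∃ π : Equiv.Perm I, ∀ j g,
      (D j g).map (τ i χ : A →ₗ[R] A) = D (π j) g) :
    ∃ Φ : UMiy Y τ →* (A ≃ₗ[R] A),
      (∀ (i : I) (χ : Y),
        Φ (QuotientGroup.mk (Monoid.CoprodI.of (i := i) χ)) = τ i (χ : Γ →* Rˣ)) ∧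
      Φ.ker ≤ Subgroup.center (UMiy Y τ) :=
  universal_miyamoto_central_extension_general D hsup Y τ hτ hclosed
end

section
/- Let (φ, ψ) : (A, I, Ω_A) → (B, J, Ω_B) be a morphism of Φ-decomposition algebras. Then K = ker φ is a decomposition ideal of (A, I, Ω_A): for each i ∈ I, K = ⊕_{x ∈ X} (K ∩ A_x^i). -/
/-!
Write `a ∈ ker φ` as a finite sum of components `a_x ∈ A_x^i`. The images `φ a_x` lie in the
independent family `B_x^{ψ i}` and sum to `φ a = 0`, so each of them vanishes: every component
of `a` already lies in `ker φ`.
-/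

namespace LinearMap

variable {R M N ι : Type*} [Ring R] [AddCommGroup M] [Module R M] [AddCommGroup N] [Module R N]
  [DecidableEq ι]

theorem comp_dfinsupp_lsum_subtype (f : M →ₗ[R] N) {D : ι → Submodule R M}
    {E : ι → Submodule R N} (hDE : ∀ i, (D i).map f ≤ E i) :
    f ∘ₗ DFinsupp.lsum ℕ (fun i => (D i).subtype) =
      DFinsupp.lsum ℕ (fun i => (E i).subtype) ∘ₗ
        DFinsupp.mapRange.linearMap fun i => f.restrict fun x hx => hDE i ⟨x, hx, rfl⟩ := by
  ext
  simp

theorem ker_inf_iSup_eq_iSup_ker_inf (f : M →ₗ[R] N) {D : ι → Submodule R M}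
    {E : ι → Submodule R N} (hE : iSupIndep E) (hDE : ∀ i, (D i).map f ≤ E i) :
    ker f ⊓ ⨆ i, D i = ⨆ i, ker f ⊓ D i := by
  classical
  refine le_antisymm ?_ (iSup_le fun i => inf_le_inf_left _ (le_iSup D i))
  intro a ha
  obtain ⟨hker, hsup⟩ := Submodule.mem_inf.1 ha
  obtain ⟨g, rfl⟩ := (Submodule.mem_iSup_iff_exists_dfinsupp D a).1 hsup
  have hg : ∀ i, f (g i) = 0 := by
    have hzero : DFinsupp.mapRange.linearMap
        (fun i => f.restrict fun x hx => hDE i ⟨x, hx, rfl⟩) g = 0 := by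
      refine hE.dfinsupp_lsum_injective ?_
      rw [map_zero, ← comp_apply, ← comp_dfinsupp_lsum_subtype f hDE, comp_apply]
      exact hker
    intro i
    simpa using congr(($hzero i : N))
  rw [DFinsupp.lsum_apply_apply, DFinsupp.sumAddHom_apply]
  exact Submodule.dfinsuppSum_mem _ g _ fun i _ =>
    Submodule.mem_iSup_of_mem i ⟨hg i, (g i).2⟩

end LinearMap

theorem kernel_is_decomposition_ideal_general {R : Type*} [CommRing R]
    {A : Type*} [NonUnitalNonAssocRing A] [Module R A]
    {B : Type*} [NonUnitalNonAssocRing B] [Module R B]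
    {X : Type*} {I J : Type*}
    (DA : I → X → Submodule R A) (DB : J → X → Submodule R B)
    (hsupA : ∀ i, ⨆ x, DA i x = ⊤)
    (hindepB : ∀ j, iSupIndep (DB j))
    (φ : A →ₗ[R] B)
    (ψ : I → J) (hφψ : ∀ i x, (DA i x).map φ ≤ DB (ψ i) x) :
    ∀ i, LinearMap.ker φ = ⨆ x, LinearMap.ker φ ⊓ DA i x := by
  intro i
  classical
  rw [← φ.ker_inf_iSup_eq_iSup_ker_inf (hindepB (ψ i)) (hφψ i), hsupA i, inf_top_eq]

/-- The kernel of a morphism `(φ, ψ)` of `Φ`-decomposition algebras is a decomposition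
ideal: for each `i`, `ker φ = ⊕_{x ∈ X} (ker φ ∩ A_x^i)`. -/
theorem kernel_is_decomposition_ideal {R : Type*} [CommRing R]
    {A : Type*} [NonUnitalNonAssocRing A] [Module R A]
    {B : Type*} [NonUnitalNonAssocRing B] [Module R B]
    {X : Type*} (law : X → X → Set X) {I J : Type*}
    (DA : I → X → Submodule R A) (DB : J → X → Submodule R B)
    (hindepA : ∀ i, iSupIndep (DA i)) (hsupA : ∀ i, ⨆ x, DA i x = ⊤)
    (hmulA : ∀ i x y, ∀ a ∈ DA i x, ∀ b ∈ DA i y, a * b ∈ ⨆ z ∈ law x y, DA i z)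
    (hindepB : ∀ j, iSupIndep (DB j)) (hsupB : ∀ j, ⨆ x, DB j x = ⊤)
    (hmulB : ∀ j x y, ∀ a ∈ DB j x, ∀ b ∈ DB j y, a * b ∈ ⨆ z ∈ law x y, DB j z)
    (φ : A →ₗ[R] B) (hφmul : ∀ a b : A, φ (a * b) = φ a * φ b)
    (ψ : I → J) (hφψ : ∀ i x, (DA i x).map φ ≤ DB (ψ i) x) :
    ∀ i, LinearMap.ker φ = ⨆ x, LinearMap.ker φ ⊓ DA i x :=
  kernel_is_decomposition_ideal_general DA DB hsupA hindepB φ ψ hφψ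
end

section
/- Let (A, I, Ω) be a Φ-decomposition algebra and let K be a decomposition ideal of A. Then the quotient algebra B = A/I with components B_x^i := (A_x^i + K)/K is again a Φ-decomposition algebra: for each i ∈ I the sum ⊕_{x∈X} B_x^i is direct and equals B, and B_x^i B_y^i ⊆ B_{x*y}^i. -/
/-- Quotients by decomposition ideals: if `K` is a decomposition ideal of the
`Φ`-decomposition algebra `(A, I, Ω)`, then the quotient `B = A/K`, with components
`B_x^i = (A_x^i + K)/K`, is again a `Φ`-decomposition algebra.  Expressed in `A` modulo
`K`: for each `i`, the components `A_x^i + K` are independent modulo `K`, their sum is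
all of `A`, and `(A_x^i + K)(A_y^i + K) ⊆ (⊕_{z ∈ x*y} A_z^i) + K`. -/
theorem quotient_decomposition_algebra {R : Type*} [CommRing R]
    {A : Type*} [NonUnitalNonAssocRing A] [Module R A]
    {X : Type*} (law : X → X → Set X) {I : Type*}
    (D : I → X → Submodule R A)
    (hindep : ∀ i, iSupIndep (D i)) (hsup : ∀ i, ⨆ x, D i x = ⊤)
    (hmul : ∀ i x y, ∀ a ∈ D i x, ∀ b ∈ D i y, a * b ∈ ⨆ z ∈ law x y, D i z)
    (K : Submodule R A)
    (hideal : ∀ k ∈ K, ∀ a : A, a * k ∈ K ∧ k * a ∈ K)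
    (hdecide : ∀ i, K = ⨆ x, K ⊓ D i x) :
    ∀ i,
      (⨆ x, (D i x ⊔ K)) = ⊤ ∧
      (∀ x, (D i x ⊔ K) ⊓ (⨆ y, ⨆ _ : y ≠ x, (D i y ⊔ K)) ≤ K) ∧
      (∀ x y, ∀ a ∈ D i x ⊔ K, ∀ b ∈ D i y ⊔ K,
        a * b ∈ (⨆ z ∈ law x y, D i z) ⊔ K) := by
  intro i
  refine ⟨?_, ?_, ?_⟩
  · rw [eq_top_iff, ← hsup i]
    exact iSup_mono fun x => le_sup_left
  · intro x a ha
    obtain ⟨ha1, ha2⟩ := Submodule.mem_inf.1 ha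
    set S : Submodule R A := ⨆ y, ⨆ _ : y ≠ x, D i y with hS
    have hle : (⨆ y, ⨆ _ : y ≠ x, (D i y ⊔ K)) ≤ S ⊔ K :=
      iSup₂_le fun y hy => sup_le_sup (le_iSup₂ (f := fun y (_ : y ≠ x) => D i y) y hy) le_rfl
    obtain ⟨d, hd, k₁, hk₁, h1⟩ := Submodule.mem_sup.1 ha1
    obtain ⟨s, hs, k₂, hk₂, h2⟩ := Submodule.mem_sup.1 (hle ha2)
    have hK : K ≤ (K ⊓ D i x) ⊔ (K ⊓ S) := by
      conv_lhs => rw [hdecide i]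
      refine iSup_le fun y => ?_
      by_cases hy : y = x
      · subst hy; exact le_sup_left
      · exact le_sup_of_le_right
          (inf_le_inf le_rfl (le_iSup₂ (f := fun y (_ : y ≠ x) => D i y) y hy))
    have hds : d - s ∈ K := by
      have : d - s = k₂ - k₁ := by
        have h3 : d + k₁ = s + k₂ := h1.trans h2.symm
        have : d + k₁ - (s + k₁) = s + k₂ - (s + k₁) := by rw [h3]
        simpa [sub_eq_iff_eq_add, add_sub_cancel_right, add_sub_add_left_eq_sub] using this
      rw [this]; exact K.sub_mem hk₂ hk₁
    obtain ⟨c, hc, t, ht, hct⟩ := Submodule.mem_sup.1 (hK hds)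
    have hdc1 : d - c ∈ D i x := (D i x).sub_mem hd hc.2
    have hdc2 : d - c ∈ S := by
      have : d - c = s + t := by
        have : c + t = d - s := hct
        rw [eq_comm, ← sub_eq_iff_eq_add'] at this
        rw [← this]; abel
      rw [this]; exact S.add_mem hs ht.2
    have hdc0 : d - c = 0 := Submodule.disjoint_def.1 (hindep i x) _ hdc1 hdc2
    have hd_eq : d = c := by rwa [sub_eq_zero] at hdc0
    rw [← h1, hd_eq]
    exact K.add_mem hc.1 hk₁
  · intro x y a ha b hb
    obtain ⟨d, hd, k, hk, rfl⟩ := Submodule.mem_sup.1 ha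
    obtain ⟨e, he, k', hk', rfl⟩ := Submodule.mem_sup.1 hb
    have hmul' : (d + k) * (e + k') = d * e + (d * k' + k * (e + k')) := by
      rw [add_mul, mul_add, add_assoc]
    rw [hmul']
    exact Submodule.add_mem _ (Submodule.mem_sup_left (hmul i x y d hd e he))
      (Submodule.mem_sup_right (K.add_mem (hideal k' hk' d).1 (hideal k hk (e + k')).2))
end
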